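/- Let K ∈ ℝ_{>0}^{R1×R2} be entrywise positive, let μ, ν be entrywise positive probability vectors, and let v^{(t)} be the Sinkhorn iterates u^{(t+1)} = μ ./ (K v^{(t)}), v^{(t+1)} = ν ./ (Kᵀ u^{(t+1)}) with fixed point (u*, v*). Then for every t ≥ 0 and every ε > 0, ‖ε log v^{(t)} − ε log v*‖_var ≤ κ(K)^{2t} · ‖ε log v^{(0)} − ε log v*‖_var, i.e. the approximate gradient converges geometrically to the true gradient in variation seminorm. -/

import Mathlib

/-!
Both half-steps of the Sinkhorn iteration have the form `w ↦ μ ./ (A w)` with `A = K` or `Kᵀ`,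
so in log coordinates each is, up to sign, `log w ↦ log (A w)`. Birkhoff's theorem says this map
contracts the variation seminorm by `κ(A)`, and `κ(Kᵀ) = κ(K)`; a full iteration therefore
contracts `log v - log v*` by `κ(K)²`.

For the contraction, fix rows `k, l` and move along `s ↦ exp (log y + s (log x - log y))`.
The derivative of `log (A z)_k - log (A z)_l` is a difference of two weighted means of
`d = log x - log y`, which is at most the total variation distance of the two weight vectors
times `‖d‖_var`. Since the weights have cross-ratios bounded by `ψ(A)`, that total variation
distance is at most `(√ψ - 1)/(√ψ + 1)`.
-/

noncomputable section

open Finset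

/-- The variation seminorm `‖w‖_var = max_i w_i - min_i w_i`. -/
def varSeminorm {R : ℕ} (w : Fin R → ℝ) : ℝ :=
  (⨆ i, w i) - ⨅ i, w i

/-- `ψ(K) = max_{i,j,k,l} (K_{ik} K_{jl})/(K_{jk} K_{il})` for a positive matrix `K`. -/
def psiK {R1 R2 : ℕ} (K : Matrix (Fin R1) (Fin R2) ℝ) : ℝ :=
  ⨆ i, ⨆ j, ⨆ k, ⨆ l, K i k * K j l / (K j k * K i l)

/-- The Birkhoff contraction constant `κ(K) = (√ψ(K) - 1)/(√ψ(K) + 1)`. -/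
def kappaK {R1 R2 : ℕ} (K : Matrix (Fin R1) (Fin R2) ℝ) : ℝ :=
  (Real.sqrt (psiK K) - 1) / (Real.sqrt (psiK K) + 1)

open Real Matrix

section VarSeminorm

variable {R : ℕ}

theorem varSeminorm_const_mul (c : ℝ) (w : Fin R → ℝ) :
    varSeminorm (fun i => c * w i) = |c| * varSeminorm w := by
  unfold varSeminorm
  rcases le_total 0 c with hc | hc
  · rw [abs_of_nonneg hc, mul_sub, Real.mul_iSup_of_nonneg hc, Real.mul_iInf_of_nonneg hc]
  · rw [abs_of_nonpos hc, ← Real.mul_iInf_of_nonpos hc, ← Real.mul_iSup_of_nonpos hc]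
    ring

theorem varSeminorm_le_of_forall_sub_le [Nonempty (Fin R)] {w : Fin R → ℝ} {c : ℝ}
    (h : ∀ k l, w k - w l ≤ c) : varSeminorm w ≤ c := by
  rw [varSeminorm, sub_le_iff_le_add]
  refine ciSup_le fun k => ?_
  rw [← sub_le_iff_le_add']
  exact le_ciInf fun l => by linarith [h k l]

end VarSeminorm

theorem sqrt_sub_one_div_sqrt_add_one_nonneg {ψ : ℝ} (hψ : 1 ≤ ψ) :
    0 ≤ (√ψ - 1) / (√ψ + 1) := by
  have h : 1 ≤ √ψ := one_le_sqrt.mpr hψ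
  exact div_nonneg (by linarith) (by linarith)

section Psi

variable {R1 R2 : ℕ}

theorem div_le_psiK (K : Matrix (Fin R1) (Fin R2) ℝ) (i j : Fin R1) (k l : Fin R2) :
    K i k * K j l / (K j k * K i l) ≤ psiK K :=
  le_ciSup_of_le (Finite.bddAbove_range _) i <| le_ciSup_of_le (Finite.bddAbove_range _) j <|
    le_ciSup_of_le (Finite.bddAbove_range _) k <|
      le_ciSup (f := fun l => K i k * K j l / (K j k * K i l)) (Finite.bddAbove_range _) l

theorem mul_le_psiK_mul {K : Matrix (Fin R1) (Fin R2) ℝ} (hK : ∀ i j, 0 < K i j)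
    (i j : Fin R1) (k l : Fin R2) : K i k * K j l ≤ psiK K * (K j k * K i l) := by
  have h := div_le_psiK K i j k l
  rwa [div_le_iff₀ (mul_pos (hK j k) (hK i l))] at h

theorem psiK_le [Nonempty (Fin R1)] [Nonempty (Fin R2)] {K : Matrix (Fin R1) (Fin R2) ℝ} {c : ℝ}
    (h : ∀ i j k l, K i k * K j l / (K j k * K i l) ≤ c) : psiK K ≤ c :=
  ciSup_le fun i => ciSup_le fun j => ciSup_le fun k => ciSup_le fun l => h i j k l

theorem one_le_psiK [Nonempty (Fin R1)] [Nonempty (Fin R2)] {K : Matrix (Fin R1) (Fin R2) ℝ}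
    (hK : ∀ i j, 0 < K i j) : 1 ≤ psiK K := by
  obtain ⟨i⟩ := ‹Nonempty (Fin R1)›
  obtain ⟨k⟩ := ‹Nonempty (Fin R2)›
  simpa [div_self (mul_pos (hK i k) (hK i k)).ne'] using div_le_psiK K i i k k

theorem psiK_transpose [Nonempty (Fin R1)] [Nonempty (Fin R2)] (K : Matrix (Fin R1) (Fin R2) ℝ) :
    psiK Kᵀ = psiK K :=
  le_antisymm (psiK_le fun i j k l => by simpa [mul_comm] using div_le_psiK K k l i j)
    (psiK_le fun i j k l => by simpa [mul_comm] using div_le_psiK Kᵀ k l i j)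

theorem kappaK_transpose [Nonempty (Fin R1)] [Nonempty (Fin R2)]
    (K : Matrix (Fin R1) (Fin R2) ℝ) : kappaK Kᵀ = kappaK K := by
  rw [kappaK, kappaK, psiK_transpose]

theorem kappaK_nonneg [Nonempty (Fin R1)] [Nonempty (Fin R2)] {K : Matrix (Fin R1) (Fin R2) ℝ}
    (hK : ∀ i j, 0 < K i j) : 0 ≤ kappaK K :=
  sqrt_sub_one_div_sqrt_add_one_nonneg (one_le_psiK hK)

end Psi

section WeightedMeans

variable {ι : Type*} [Fintype ι]

theorem div_add_sub_div_add_le {p q s t ψ : ℝ} (hp : 0 < p) (hq : 0 < q) (hs : 0 < s)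
    (ht : 0 < t) (hψ : 1 ≤ ψ) (h : p * t ≤ ψ * (q * s)) :
    p / (p + q) - s / (s + t) ≤ (√ψ - 1) / (√ψ + 1) := by
  have hσ : 1 ≤ √ψ := one_le_sqrt.mpr hψ
  set u := √(p * t)
  set v := √(q * s)
  have hu : u ^ 2 = p * t := sq_sqrt (by positivity)
  have hv : v ^ 2 = q * s := sq_sqrt (by positivity)
  have hu_le : u ≤ √ψ * v := by
    rw [← sqrt_mul (by linarith)]
    exact sqrt_le_sqrt h
  -- AM-GM, since `(u v)² = (p s) (q t)`
  have hamgm : 2 * (u * v) ≤ p * s + q * t := by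
    refine (pow_le_pow_iff_left₀ (by positivity) (by positivity) two_ne_zero).1 ?_
    rw [mul_pow, mul_pow, hu, hv]
    nlinarith [sq_nonneg (p * s - q * t)]
  -- `(p t - q s)(√ψ + 1) = (u - v)(u + v)(√ψ + 1) ≤ (u + v)²(√ψ - 1) ≤ (p + q)(s + t)(√ψ - 1)`
  rw [div_sub_div _ _ (by positivity) (by positivity),
    div_le_div_iff₀ (by positivity) (by positivity)]
  nlinarith [mul_nonneg (sub_nonneg.2 hu_le) (by positivity : 0 ≤ u + v),
    mul_le_mul_of_nonneg_left hamgm (sub_nonneg.2 hσ)]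

theorem sum_div_sum_sub_sum_div_sum_le {a a' : ι → ℝ} {ψ : ℝ} (ha : ∀ i, 0 < a i)
    (ha' : ∀ i, 0 < a' i) (hψ : 1 ≤ ψ) (hcross : ∀ i j, a i * a' j ≤ ψ * (a j * a' i))
    (S : Finset ι) :
    (∑ i ∈ S, a i) / (∑ i, a i) - (∑ i ∈ S, a' i) / (∑ i, a' i) ≤ (√ψ - 1) / (√ψ + 1) := by
  classical
  have hκ := sqrt_sub_one_div_sqrt_add_one_nonneg hψ
  rcases S.eq_empty_or_nonempty with rfl | hS
  · simpa using hκ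
  rcases Sᶜ.eq_empty_or_nonempty with hSc | hSc
  · obtain rfl := (compl_eq_empty_iff S).1 hSc
    rw [div_self (sum_pos (fun i _ => ha i) hS).ne', div_self (sum_pos (fun i _ => ha' i) hS).ne',
      sub_self]
    exact hκ
  rw [← sum_add_sum_compl S a, ← sum_add_sum_compl S a']
  refine div_add_sub_div_add_le (sum_pos (fun i _ => ha i) hS) (sum_pos (fun i _ => ha i) hSc)
    (sum_pos (fun i _ => ha' i) hS) (sum_pos (fun i _ => ha' i) hSc) hψ ?_
  calc (∑ i ∈ S, a i) * ∑ j ∈ Sᶜ, a' j = ∑ i ∈ S, ∑ j ∈ Sᶜ, a i * a' j := sum_mul_sum _ _ _ _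
    _ ≤ ∑ i ∈ S, ∑ j ∈ Sᶜ, ψ * (a j * a' i) :=
      sum_le_sum fun i _ => sum_le_sum fun j _ => hcross i j
    _ = ψ * ((∑ j ∈ Sᶜ, a j) * ∑ i ∈ S, a' i) := by
      rw [sum_mul_sum, mul_sum, sum_comm]
      simp only [mul_sum]

theorem sum_mul_le_sum_filter_nonneg_mul {w d : ι → ℝ} {lo hi : ℝ} (hw : ∑ i, w i = 0)
    (hlo : ∀ i, lo ≤ d i) (hhi : ∀ i, d i ≤ hi) :
    ∑ i, w i * d i ≤ (∑ i with 0 ≤ w i, w i) * (hi - lo) :=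
  calc ∑ i, w i * d i = ∑ i, w i * (d i - lo) := by
        simp only [mul_sub, sum_sub_distrib, ← sum_mul, hw, zero_mul, sub_zero]
    _ ≤ ∑ i, (if 0 ≤ w i then w i else 0) * (hi - lo) := by
        refine sum_le_sum fun i _ => ?_
        split_ifs with h
        · exact mul_le_mul_of_nonneg_left (by linarith [hhi i]) h
        · nlinarith [hlo i]
    _ = (∑ i with 0 ≤ w i, w i) * (hi - lo) := by rw [sum_filter, sum_mul]

theorem sum_mul_div_sum_sub_sum_mul_div_sum_le [Nonempty ι] {a a' d : ι → ℝ} {ψ lo hi : ℝ}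
    (ha : ∀ i, 0 < a i) (ha' : ∀ i, 0 < a' i) (hψ : 1 ≤ ψ)
    (hcross : ∀ i j, a i * a' j ≤ ψ * (a j * a' i)) (hlo : ∀ i, lo ≤ d i) (hhi : ∀ i, d i ≤ hi) :
    (∑ i, a i * d i) / (∑ i, a i) - (∑ i, a' i * d i) / (∑ i, a' i) ≤
      (√ψ - 1) / (√ψ + 1) * (hi - lo) := by
  have hA : 0 < ∑ i, a i := sum_pos (fun i _ => ha i) univ_nonempty
  have hA' : 0 < ∑ i, a' i := sum_pos (fun i _ => ha' i) univ_nonempty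
  let w : ι → ℝ := fun i => a i / ∑ j, a j - a' i / ∑ j, a' j
  have hw : ∑ i, w i = 0 := by
    simp only [w, sum_sub_distrib, ← sum_div, div_self hA.ne', div_self hA'.ne', sub_self]
  have hmean : (∑ i, a i * d i) / (∑ i, a i) - (∑ i, a' i * d i) / (∑ i, a' i) =
      ∑ i, w i * d i := by
    simp only [w, sub_mul, sum_sub_distrib, sum_div, div_mul_eq_mul_div]
  have htv : ∑ i with 0 ≤ w i, w i ≤ (√ψ - 1) / (√ψ + 1) := by
    simp only [w, sum_sub_distrib, ← sum_div]
    exact sum_div_sum_sub_sum_div_sum_le ha ha' hψ hcross _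
  obtain ⟨i⟩ := ‹Nonempty ι›
  rw [hmean]
  exact (sum_mul_le_sum_filter_nonneg_mul hw hlo hhi).trans
    (mul_le_mul_of_nonneg_right htv (by linarith [hlo i, hhi i]))

theorem hasDerivAt_log_sum_mul_exp [Nonempty ι] {w : ι → ℝ} (hw : ∀ i, 0 < w i) (g d : ι → ℝ)
    (s : ℝ) :
    HasDerivAt (fun s => log (∑ i, w i * exp (g i + s * d i)))
      ((∑ i, w i * exp (g i + s * d i) * d i) / ∑ i, w i * exp (g i + s * d i)) s := by
  have hsum : HasDerivAt (fun s => ∑ i, w i * exp (g i + s * d i))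
      (∑ i, w i * exp (g i + s * d i) * d i) s :=
    HasDerivAt.fun_sum fun i _ => by
      simpa [mul_assoc] using
        (((hasDerivAt_mul_const (d i)).const_add (g i)).exp).const_mul (w i)
  exact hsum.log (sum_pos (fun i _ => mul_pos (hw i) (exp_pos _)) univ_nonempty).ne'

end WeightedMeans

section Contraction

variable {R1 R2 : ℕ} [Nonempty (Fin R1)] [Nonempty (Fin R2)] {K : Matrix (Fin R1) (Fin R2) ℝ}

theorem varSeminorm_log_mulVec_sub_le (hK : ∀ i j, 0 < K i j) {x y : Fin R2 → ℝ}
    (hx : ∀ i, 0 < x i) (hy : ∀ i, 0 < y i) :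
    varSeminorm (fun k => log ((K *ᵥ x) k) - log ((K *ᵥ y) k)) ≤
      kappaK K * varSeminorm (fun i => log (x i) - log (y i)) := by
  refine varSeminorm_le_of_forall_sub_le fun k l => ?_
  set d : Fin R2 → ℝ := fun i => log (x i) - log (y i)
  -- `z s = y ^ (1 - s) * x ^ s`
  let z : ℝ → Fin R2 → ℝ := fun s i => exp (log (y i) + s * d i)
  have hz0 : z 0 = y := funext fun i => by simp [z, exp_log (hy i)]
  have hz1 : z 1 = x := funext fun i => by simp [z, d, exp_log (hx i)]
  let φ : ℝ → ℝ := fun s => log ((K *ᵥ z s) k) - log ((K *ᵥ z s) l)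
  let φ' : ℝ → ℝ := fun s => (∑ i, K k i * z s i * d i) / (∑ i, K k i * z s i) -
    (∑ i, K l i * z s i * d i) / (∑ i, K l i * z s i)
  have hφ : ∀ s, HasDerivAt φ (φ' s) s := fun s =>
    (hasDerivAt_log_sum_mul_exp (hK k) _ d s).sub (hasDerivAt_log_sum_mul_exp (hK l) _ d s)
  obtain ⟨c, -, hc⟩ := exists_hasDerivAt_eq_slope φ φ' zero_lt_one
    (fun s _ => (hφ s).continuousAt.continuousWithinAt) (fun s _ => hφ s)
  have hcross : ∀ i j, K k i * z c i * (K l j * z c j) ≤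
      psiK K * (K k j * z c j * (K l i * z c i)) := fun i j =>
    calc K k i * z c i * (K l j * z c j) = K k i * K l j * (z c i * z c j) := by ring
      _ ≤ psiK K * (K l i * K k j) * (z c i * z c j) :=
        mul_le_mul_of_nonneg_right (mul_le_psiK_mul hK k l i j) (by positivity)
      _ = psiK K * (K k j * z c j * (K l i * z c i)) := by ring
  calc log ((K *ᵥ x) k) - log ((K *ᵥ y) k) - (log ((K *ᵥ x) l) - log ((K *ᵥ y) l))
        = φ 1 - φ 0 := by simp only [φ, hz0, hz1]; ring
    _ = φ' c := by rw [hc, sub_zero, div_one]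
    _ ≤ kappaK K * ((⨆ i, d i) - ⨅ i, d i) :=
      sum_mul_div_sum_sub_sum_mul_div_sum_le (fun i => mul_pos (hK k i) (exp_pos _))
        (fun i => mul_pos (hK l i) (exp_pos _)) (one_le_psiK hK) hcross
        (fun i => ciInf_le (Finite.bddBelow_range d) i)
        (fun i => le_ciSup (Finite.bddAbove_range d) i)

theorem varSeminorm_log_div_mulVec_sub_le (hK : ∀ i j, 0 < K i j) {μ : Fin R1 → ℝ}
    (hμ : ∀ i, 0 < μ i) {x y : Fin R2 → ℝ} (hx : ∀ i, 0 < x i) (hy : ∀ i, 0 < y i) :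
    varSeminorm (fun k => log (μ k / (K *ᵥ y) k) - log (μ k / (K *ᵥ x) k)) ≤
      kappaK K * varSeminorm (fun i => log (x i) - log (y i)) := by
  have hKz : ∀ z : Fin R2 → ℝ, (∀ i, 0 < z i) → ∀ k, (K *ᵥ z) k ≠ 0 := fun z hz k =>
    (sum_pos (fun i _ => mul_pos (hK k i) (hz i)) univ_nonempty).ne'
  have e : ∀ k, log (μ k / (K *ᵥ y) k) - log (μ k / (K *ᵥ x) k) =
      log ((K *ᵥ x) k) - log ((K *ᵥ y) k) := fun k => by
    rw [log_div (hμ k).ne' (hKz y hy k), log_div (hμ k).ne' (hKz x hx k)]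
    ring
  simpa only [e] using varSeminorm_log_mulVec_sub_le hK hx hy

end Contraction

theorem sinkhorn_gradient_geometric_convergence_general {R1 R2 : ℕ}
    [Nonempty (Fin R1)] [Nonempty (Fin R2)]
    (K : Matrix (Fin R1) (Fin R2) ℝ) (hK : ∀ i j, 0 < K i j)
    (μ : Fin R1 → ℝ) (ν : Fin R2 → ℝ)
    (hμpos : ∀ m, 0 < μ m) (hνpos : ∀ n, 0 < ν n)
    (u : ℕ → Fin R1 → ℝ) (v : ℕ → Fin R2 → ℝ)
    (hupos : ∀ t m, 0 < u t m) (hvpos : ∀ t n, 0 < v t n)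
    (hiter_u : ∀ t m, u (t + 1) m = μ m / K.mulVec (v t) m)
    (hiter_v : ∀ t n, v (t + 1) n = ν n / K.transpose.mulVec (u (t + 1)) n)
    (ustar : Fin R1 → ℝ) (vstar : Fin R2 → ℝ)
    (hustar_pos : ∀ m, 0 < ustar m) (hvstar_pos : ∀ n, 0 < vstar n)
    (hustar : ∀ m, ustar m = μ m / K.mulVec vstar m)
    (hvstar : ∀ n, vstar n = ν n / K.transpose.mulVec ustar n)
    (ε : ℝ) :
    ∀ t : ℕ,
      varSeminorm (fun n => ε * Real.log (v t n) - ε * Real.log (vstar n)) ≤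
        kappaK K ^ (2 * t) *
          varSeminorm (fun n => ε * Real.log (v 0 n) - ε * Real.log (vstar n)) := by
  have hκ := kappaK_nonneg hK
  have hstep : ∀ t, varSeminorm (fun n => log (v (t + 1) n) - log (vstar n)) ≤
      kappaK K ^ 2 * varSeminorm (fun n => log (v t n) - log (vstar n)) := fun t => by
    have hu : varSeminorm (fun m => log (ustar m) - log (u (t + 1) m)) ≤
        kappaK K * varSeminorm (fun n => log (v t n) - log (vstar n)) := by
      simpa only [hustar, hiter_u] using
        varSeminorm_log_div_mulVec_sub_le hK hμpos (hvpos t) hvstar_pos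
    have hv : varSeminorm (fun n => log (v (t + 1) n) - log (vstar n)) ≤
        kappaK K * varSeminorm (fun m => log (ustar m) - log (u (t + 1) m)) := by
      simpa only [hiter_v, hvstar, kappaK_transpose] using
        varSeminorm_log_div_mulVec_sub_le (K := Kᵀ) (fun i j => hK j i) hνpos hustar_pos
          (hupos (t + 1))
    calc _ ≤ kappaK K * (kappaK K * varSeminorm (fun n => log (v t n) - log (vstar n))) :=
          hv.trans (mul_le_mul_of_nonneg_left hu hκ)
      _ = _ := by ring
  intro t
  simp only [← mul_sub, varSeminorm_const_mul]
  rw [pow_mul, mul_left_comm]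
  exact mul_le_mul_of_nonneg_left
    (le_geom (u := fun t => varSeminorm fun n => log (v t n) - log (vstar n)) (sq_nonneg _) t
      fun k _ => hstep k) (abs_nonneg ε)

/-- Geometric convergence of the approximate Sinkhorn gradient: along the Sinkhorn
iterations with fixed point `(u*, v*)`, for every `t` and every `ε > 0`,
`‖ε log v^{(t)} - ε log v*‖_var ≤ κ(K)^{2t} ‖ε log v^{(0)} - ε log v*‖_var`. -/
theorem sinkhorn_gradient_geometric_convergence {R1 R2 : ℕ}
    [Nonempty (Fin R1)] [Nonempty (Fin R2)]
    (K : Matrix (Fin R1) (Fin R2) ℝ) (hK : ∀ i j, 0 < K i j)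
    (μ : Fin R1 → ℝ) (ν : Fin R2 → ℝ)
    (hμpos : ∀ m, 0 < μ m) (hνpos : ∀ n, 0 < ν n)
    (hμsum : ∑ m, μ m = 1) (hνsum : ∑ n, ν n = 1)
    (u : ℕ → Fin R1 → ℝ) (v : ℕ → Fin R2 → ℝ)
    (hupos : ∀ t m, 0 < u t m) (hvpos : ∀ t n, 0 < v t n)
    (hiter_u : ∀ t m, u (t + 1) m = μ m / K.mulVec (v t) m)
    (hiter_v : ∀ t n, v (t + 1) n = ν n / K.transpose.mulVec (u (t + 1)) n)
    (ustar : Fin R1 → ℝ) (vstar : Fin R2 → ℝ)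
    (hustar_pos : ∀ m, 0 < ustar m) (hvstar_pos : ∀ n, 0 < vstar n)
    (hustar : ∀ m, ustar m = μ m / K.mulVec vstar m)
    (hvstar : ∀ n, vstar n = ν n / K.transpose.mulVec ustar n)
    (ε : ℝ) (hε : 0 < ε) :
    ∀ t : ℕ,
      varSeminorm (fun n => ε * Real.log (v t n) - ε * Real.log (vstar n)) ≤
        kappaK K ^ (2 * t) *
          varSeminorm (fun n => ε * Real.log (v 0 n) - ε * Real.log (vstar n)) :=
  sinkhorn_gradient_geometric_convergence_general K hK μ ν hμpos hνpos u v hupos hvpos hiter_u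
    hiter_v ustar vstar hustar_pos hvstar_pos hustar hvstar ε
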